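/- Let K_0/Q_p be a finite unramified extension with Frobenius σ, and let W be a finite-dimensional K_0-vector space equipped with a bijective σ-semilinear map φ : W → W. Then the map f ↦ Tr_{K_0/Q_p} ∘ f induces an isomorphism from Hom_{K_0}(W, K_0)^{φ=1} (the K_0-linear functionals f satisfying f(φ(w)) = σ(f(w)) for all w) onto Hom_{Q_p}(W/(1−φ)W, Q_p). -/

import Mathlib

/-!
Since `K₀/ℚ_p` is separable the trace form is nondegenerate, so `f ↦ Tr ∘ f` is injective on all
`K₀`-linear functionals, hence bijective onto `Hom_{ℚ_p}(W, ℚ_p)` by counting dimensions. A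
`φ`-equivariant `f` satisfies `Tr (f (w - φ w)) = Tr (f w) - Tr (σ (f w)) = 0`. Conversely, if
`g = Tr ∘ f` kills `(1 - φ) W`, then `σ⁻¹ ∘ f ∘ φ` is again `K₀`-linear with trace `g ∘ φ = g`,
so it equals `f` by injectivity, i.e. `f` is `φ`-equivariant.
-/

section TraceDual

variable (K L : Type*) {V : Type*} [Field K] [Field L] [Algebra K L]
  [AddCommGroup V] [Module L V] [Module K V] [IsScalarTower K L V]

noncomputable def traceDual : (V →ₗ[L] L) →ₗ[K] (V →ₗ[K] K) where
  toFun f := (Algebra.trace K L).comp (f.restrictScalars K)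
  map_add' f g := by ext w; simp
  map_smul' a f := by ext w; simp

variable {K L}

@[simp] lemma traceDual_apply (f : V →ₗ[L] L) (w : V) :
    traceDual K L f w = Algebra.trace K L (f w) := rfl

variable [FiniteDimensional K L] [Algebra.IsSeparable K L]

lemma traceDual_injective : Function.Injective (traceDual K L (V := V)) := by
  rw [← LinearMap.ker_eq_bot, LinearMap.ker_eq_bot']
  intro f hf
  ext w
  refine (traceForm_nondegenerate K L).1 (f w) fun c => ?_
  simpa [mul_comm] using DFunLike.congr_fun hf (c • w)

lemma traceDual_bijective [FiniteDimensional L V] :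
    Function.Bijective (traceDual K L (V := V)) := by
  have : FiniteDimensional K V := Module.Finite.trans L V
  have hrank : Module.finrank K (V →ₗ[L] L) = Module.finrank K (V →ₗ[K] K) := by
    rw [Module.finrank_linearMap_self K K V, ← Module.finrank_mul_finrank K L (V →ₗ[L] L),
      Module.finrank_linearMap_self L L V, Module.finrank_mul_finrank K L V]
  exact ⟨traceDual_injective,
    (LinearMap.injective_iff_surjective_of_finrank_eq_finrank hrank).mp traceDual_injective⟩

end TraceDual

section Semilinear

variable {K L V : Type*} [Field K] [Field L] [Algebra K L] [AddCommGroup V] [Module L V]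
  (σ : L ≃ₐ[K] L) (φ : V →+ V)

def semilinearPullback (hφ : ∀ (c : L) (w : V), φ (c • w) = σ c • φ w) (f : V →ₗ[L] L) :
    V →ₗ[L] L where
  toFun w := σ.symm (f (φ w))
  map_add' x y := by simp
  map_smul' c w := by simp [hφ]

lemma semilinearPullback_eq_self_iff (hφ : ∀ (c : L) (w : V), φ (c • w) = σ c • φ w)
    (f : V →ₗ[L] L) :
    semilinearPullback σ φ hφ f = f ↔ ∀ w, f (φ w) = σ (f w) := by
  simp only [LinearMap.ext_iff, semilinearPullback, LinearMap.coe_mk, AddHom.coe_mk,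
    AlgEquiv.symm_apply_eq]

variable [Module K V] [IsScalarTower K L V]

lemma traceDual_semilinearPullback (hφ : ∀ (c : L) (w : V), φ (c • w) = σ c • φ w)
    (f : V →ₗ[L] L) (w : V) :
    traceDual K L (semilinearPullback σ φ hφ f) w = traceDual K L f (φ w) :=
  Algebra.trace_eq_of_algEquiv σ.symm (f (φ w))

lemma traceDual_sub_apply_eq_zero_iff [FiniteDimensional K L] [Algebra.IsSeparable K L]
    (hφ : ∀ (c : L) (w : V), φ (c • w) = σ c • φ w) (f : V →ₗ[L] L) :
    (∀ w, traceDual K L f (w - φ w) = 0) ↔ ∀ w, f (φ w) = σ (f w) := by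
  simp only [map_sub, sub_eq_zero]
  constructor
  · intro hf
    rw [← semilinearPullback_eq_self_iff σ φ hφ]
    refine traceDual_injective (K := K) (LinearMap.ext fun w => ?_)
    exact (traceDual_semilinearPullback σ φ hφ f w).trans (hf w).symm
  · intro hf w
    rw [traceDual_apply, traceDual_apply, hf, Algebra.trace_eq_of_algEquiv]

end Semilinear

theorem stmt14_general (p : ℕ) [Fact p.Prime] (K₀ : Type*) [Field K₀] [Algebra ℚ_[p] K₀]
    [FiniteDimensional ℚ_[p] K₀]
    (σ : K₀ ≃ₐ[ℚ_[p]] K₀)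
    (W : Type*) [AddCommGroup W] [Module K₀ W] [FiniteDimensional K₀ W]
    [Module ℚ_[p] W] [IsScalarTower ℚ_[p] K₀ W]
    (φ : W →+ W)
    (hsemi : ∀ (c : K₀) (w : W), φ (c • w) = σ c • φ w) :
    Function.Injective
        (fun f : {f : W →ₗ[K₀] K₀ // ∀ w, f (φ w) = σ (f w)} =>
          (Algebra.trace ℚ_[p] K₀).comp (f.1.restrictScalars ℚ_[p])) ∧
      Set.range
          (fun f : {f : W →ₗ[K₀] K₀ // ∀ w, f (φ w) = σ (f w)} =>
            (Algebra.trace ℚ_[p] K₀).comp (f.1.restrictScalars ℚ_[p]))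
        = {g : W →ₗ[ℚ_[p]] ℚ_[p] | ∀ w : W, g (w - φ w) = 0} := by
  obtain ⟨hinj, hsurj⟩ := traceDual_bijective (K := ℚ_[p]) (L := K₀) (V := W)
  refine ⟨fun f g h => Subtype.ext (hinj h), Set.ext fun g => ⟨?_, fun hg => ?_⟩⟩
  · rintro ⟨f, rfl⟩
    exact (traceDual_sub_apply_eq_zero_iff σ φ hsemi f.1).mpr f.2
  · obtain ⟨f, rfl⟩ := hsurj g
    exact ⟨⟨f, (traceDual_sub_apply_eq_zero_iff σ φ hsemi f).mp hg⟩, rfl⟩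

theorem stmt14 (p : ℕ) [Fact p.Prime] (K₀ : Type*) [Field K₀] [Algebra ℚ_[p] K₀]
    [FiniteDimensional ℚ_[p] K₀] [IsGalois ℚ_[p] K₀]
    (σ : K₀ ≃ₐ[ℚ_[p]] K₀) (hσ : orderOf σ = Module.finrank ℚ_[p] K₀)
    (W : Type*) [AddCommGroup W] [Module K₀ W] [FiniteDimensional K₀ W]
    [Module ℚ_[p] W] [IsScalarTower ℚ_[p] K₀ W]
    (φ : W →+ W) (hbij : Function.Bijective φ)
    (hsemi : ∀ (c : K₀) (w : W), φ (c • w) = σ c • φ w) :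
    Function.Injective
        (fun f : {f : W →ₗ[K₀] K₀ // ∀ w, f (φ w) = σ (f w)} =>
          (Algebra.trace ℚ_[p] K₀).comp (f.1.restrictScalars ℚ_[p])) ∧
      Set.range
          (fun f : {f : W →ₗ[K₀] K₀ // ∀ w, f (φ w) = σ (f w)} =>
            (Algebra.trace ℚ_[p] K₀).comp (f.1.restrictScalars ℚ_[p]))
        = {g : W →ₗ[ℚ_[p]] ℚ_[p] | ∀ w : W, g (w - φ w) = 0} :=
  stmt14_general p K₀ σ W φ hsemi
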